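/- Let M be the set of Δ×Δ matrices over F_2 of rank exactly r in which every row and every column has Hamming weight strictly less than t, where t ≤ Δ/2. Then |M| ≤ 2^{2rΔ h(t/Δ) + 2Δ h(r/Δ)}, where h is the binary entropy function. -/

import Mathlib

/-!
A rank-`r` matrix is determined by `r` rows spanning its row space and `r` columns spanning its
column space. Indeed, write `M = A * R` with `R` the chosen rows of `M` and `M' = C' * B` with `C'`
the chosen columns of `M'`; if `M` and `M'` agree on these rows (`R = R'`) and columns (`C = C'`),
then `M' = C * B = A * (R restricted to the chosen columns) * B = A * R' = A * R = M`.
With rows and columns of weight `< t` this leaves at most `C(Δ, r)²` choices of positions and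
`N^{2r}` choices of entries, where `N ≤ ∑_{j < t} C(Δ, j)`. Both `C(n, k) ≤ 2^{n h(k/n)}` and,
for `2t ≤ n`, `∑_{j < t} C(n, j) ≤ 2^{n h(t/n)}` follow by comparison with the terms of
`1 = (p + (1 - p))^n` at `p = k/n`, since `p^k (1-p)^{n-k} = 2^{-n h(p)}` and, for `p ≤ 1/2`,
`p^j (1-p)^{n-j}` decreases in `j`.
-/

noncomputable def binEnt (p : ℝ) : ℝ := -p * Real.logb 2 p - (1 - p) * Real.logb 2 (1 - p)

open Finset Submodule

theorem OrderEmbedding.card_fin_le_choose {α : Type*} [Fintype α] [LinearOrder α] (r : ℕ) :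
    Nat.card (Fin r ↪o α) ≤ (Fintype.card α).choose r := by
  classical
  let image (e : Fin r ↪o α) : {s : Finset α // s.card = r} :=
    ⟨univ.map e.toEmbedding, by rw [card_map, card_univ, Fintype.card_fin]⟩
  have hunique (e : Fin r ↪o α) : e = (image e).1.orderEmbOfFin (image e).2 :=
    orderEmbOfFin_unique' _ fun _ => by simp [image]
  have himage : Function.Injective image := fun e e' h => by
    rw [hunique e, hunique e', h]
  calc Nat.card (Fin r ↪o α) ≤ Nat.card {s : Finset α // s.card = r} :=
        Nat.card_le_card_of_injective image himage
    _ = (Fintype.card α).choose r := by rw [Nat.card_eq_fintype_card, Fintype.card_finset_len]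

namespace Matrix

variable {l m n o α K : Type*}

theorem eq_of_submatrix_eq_of_factor [Fintype l] [Fintype o] [NonUnitalSemiring α]
    {M M' : Matrix m n α} {e : l → m} {f : o → n} {A : Matrix m l α} {B : Matrix o n α}
    (hA : A * M.submatrix e id = M) (hB : M'.submatrix id f * B = M')
    (hrows : M.submatrix e id = M'.submatrix e id)
    (hcols : M.submatrix id f = M'.submatrix id f) : M = M' := by
  have hcorner : M.submatrix e f = M'.submatrix e f := congrArg (submatrix · e id) hcols
  calc M = A * M.submatrix e id := hA.symm
    _ = A * (M'.submatrix id f * B).submatrix e id := by rw [hrows, hB]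
    _ = A * (M'.submatrix e f * B) := rfl
    _ = (A * M.submatrix e id).submatrix id f * B := by rw [← hcorner, ← Matrix.mul_assoc]; rfl
    _ = M' := by rw [hA, hcols, hB]

variable [Field K] [Fintype m] [Fintype n]

theorem exists_orderEmbedding_mul_submatrix_eq [LinearOrder m] {M : Matrix m n K} {r : ℕ}
    (hr : M.rank = r) : ∃ (e : Fin r ↪o m) (A : Matrix m (Fin r) K), A * M.submatrix e id = M := by
  obtain ⟨κ, a, ha, hspan, hli⟩ := exists_linearIndependent' K M.row
  have : Fintype κ := have := Finite.of_injective a ha; Fintype.ofFinite κ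
  have hcard : (univ.map ⟨a, ha⟩).card = r := by
    rw [card_map, card_univ, ← finrank_span_eq_card hli, hspan, ← rank_eq_finrank_span_row, hr]
  let e := (univ.map ⟨a, ha⟩).orderEmbOfFin hcard
  have hspan_e : span K (Set.range fun k => M (e k)) = span K (Set.range M.row) := by
    rw [← hspan, Set.range_comp' M e, range_orderEmbOfFin, coe_map, coe_univ, Set.image_univ,
      Set.range_comp]
    rfl
  have hmem (i : m) : M i ∈ span K (Set.range fun k => M (e k)) :=
    hspan_e ▸ subset_span ⟨i, rfl⟩
  choose c hc using fun i => (mem_span_range_iff_exists_fun K).mp (hmem i)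
  refine ⟨e, of c, ?_⟩
  ext i j
  simp [mul_apply, ← hc i, Finset.sum_apply]

theorem exists_orderEmbedding_submatrix_mul_eq [LinearOrder n] {M : Matrix m n K} {r : ℕ}
    (hr : M.rank = r) : ∃ (f : Fin r ↪o n) (B : Matrix (Fin r) n K), M.submatrix id f * B = M := by
  obtain ⟨f, A, hA⟩ := exists_orderEmbedding_mul_submatrix_eq (M := Mᵀ) (r := r)
    (by rwa [rank_transpose])
  exact ⟨f, Aᵀ, by simpa [transpose_mul] using congrArg transpose hA⟩

theorem card_rank_eq_rows_mem_cols_mem_le [LinearOrder m] [LinearOrder n] [Finite K] (r : ℕ)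
    (P : Set (n → K)) (Q : Set (m → K)) :
    Nat.card {M : Matrix m n K // M.rank = r ∧ (∀ i, M i ∈ P) ∧ ∀ j, Mᵀ j ∈ Q} ≤
      (Fintype.card m).choose r * (Fintype.card n).choose r *
        (Nat.card P ^ r * Nat.card Q ^ r) := by
  set S := {M : Matrix m n K // M.rank = r ∧ (∀ i, M i ∈ P) ∧ ∀ j, Mᵀ j ∈ Q}
  choose e A hA using fun M : S => exists_orderEmbedding_mul_submatrix_eq M.2.1
  choose f B hB using fun M : S => exists_orderEmbedding_submatrix_mul_eq M.2.1
  let code (M : S) : (Fin r ↪o m) × (Fin r ↪o n) × (Fin r → P) × (Fin r → Q) :=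
    (e M, f M, fun k => ⟨M.1 (e M k), M.2.2.1 _⟩, fun k => ⟨M.1ᵀ (f M k), M.2.2.2 _⟩)
  have hcode : Function.Injective code := by
    intro M M' h
    simp only [code, Prod.mk.injEq, funext_iff, Subtype.ext_iff] at h
    obtain ⟨he, hf, hrows, hcols⟩ := h
    refine Subtype.ext (eq_of_submatrix_eq_of_factor (hA M) (hB M') ?_ ?_)
    · ext k j
      simpa [he] using hrows k j
    · ext i k
      simpa [hf] using hcols k i
  calc Nat.card S ≤ Nat.card ((Fin r ↪o m) × (Fin r ↪o n) × (Fin r → P) × (Fin r → Q)) :=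
        Nat.card_le_card_of_injective code hcode
    _ ≤ _ := by
        simp only [Nat.card_prod, Nat.card_fun, Nat.card_eq_fintype_card (α := Fin r),
          Fintype.card_fin, ← mul_assoc]
        gcongr <;> exact OrderEmbedding.card_fin_le_choose r

end Matrix

theorem card_zmod_two_weight_lt_le {α : Type*} [Fintype α] (t : ℕ) :
    Nat.card {v : α → ZMod 2 | #{i | v i ≠ 0} < t} ≤
      ∑ j ∈ range t, (Fintype.card α).choose j := by
  classical
  let support (v : {v : α → ZMod 2 | #{i | v i ≠ 0} < t}) : {s : Finset α // #s < t} :=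
    ⟨univ.filter (v.1 · ≠ 0), v.2⟩
  have hsupport : Function.Injective support := fun v w h => by
    have hzmod : ∀ a b : ZMod 2, (a ≠ 0 ↔ b ≠ 0) → a = b := by decide
    ext i
    exact hzmod _ _ (by simpa [support] using congrArg (i ∈ ·.1) h)
  calc Nat.card {v : α → ZMod 2 | #{i | v i ≠ 0} < t}
      ≤ Nat.card {s : Finset α // #s < t} := Nat.card_le_card_of_injective support hsupport
    _ = #{s : Finset α | #s < t} := by rw [Nat.card_eq_fintype_card, Fintype.card_subtype]
    _ ≤ #((range t).biUnion fun j => powersetCard j univ) :=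
        card_le_card fun s hs => by simpa using hs
    _ ≤ ∑ j ∈ range t, (Fintype.card α).choose j :=
        card_biUnion_le.trans_eq (by simp only [card_powersetCard, card_univ])

theorem div_pow_mul_one_sub_div_pow_mul_two_rpow_binEnt {n k : ℕ} (hkn : k ≤ n) :
    ((k / n : ℝ) ^ k * (1 - k / n) ^ (n - k)) * 2 ^ (n * binEnt (k / n)) = 1 := by
  rcases Nat.eq_zero_or_pos k with rfl | hk0
  · simp [binEnt]
  rcases hkn.eq_or_lt with rfl | hkn
  · have hk : (k : ℝ) ≠ 0 := by positivity
    simp [binEnt, hk]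
  have hn : (0 : ℝ) < n := by exact_mod_cast hk0.trans hkn
  have hp : (0 : ℝ) < k / n := div_pos (by exact_mod_cast hk0) hn
  have hq : (0 : ℝ) < 1 - k / n := by rw [sub_pos, div_lt_one hn]; exact_mod_cast hkn
  have hexp : (n : ℝ) * binEnt (k / n) =
      -(Real.logb 2 (k / n) * k + Real.logb 2 (1 - k / n) * (n - k : ℕ)) := by
    rw [Nat.cast_sub hkn.le, binEnt]; field_simp; ring
  rw [hexp, Real.rpow_neg zero_le_two, Real.rpow_add two_pos, Real.rpow_mul zero_le_two,
    Real.rpow_mul zero_le_two, Real.rpow_logb two_pos (by norm_num) hp,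
    Real.rpow_logb two_pos (by norm_num) hq, Real.rpow_natCast, Real.rpow_natCast,
    mul_inv_cancel₀ (by positivity)]

theorem le_two_rpow_mul_binEnt {n k : ℕ} {X : ℝ} (hkn : k ≤ n)
    (hX : X * ((k / n : ℝ) ^ k * (1 - k / n) ^ (n - k)) ≤ 1) :
    X ≤ 2 ^ (n * binEnt (k / n)) :=
  calc X = X * ((k / n : ℝ) ^ k * (1 - k / n) ^ (n - k)) * 2 ^ (n * binEnt (k / n)) := by
        rw [mul_assoc, div_pow_mul_one_sub_div_pow_mul_two_rpow_binEnt hkn, mul_one]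
    _ ≤ 2 ^ (n * binEnt (k / n)) := mul_le_of_le_one_left (by positivity) hX

theorem sum_pow_mul_one_sub_pow_mul_choose_le_one {p : ℝ} (hp₀ : 0 ≤ p) (hp₁ : p ≤ 1) {n : ℕ}
    {s : Finset ℕ} (hs : s ⊆ range (n + 1)) :
    ∑ j ∈ s, p ^ j * (1 - p) ^ (n - j) * n.choose j ≤ 1 :=
  (sum_le_sum_of_subset_of_nonneg hs fun _ _ _ => by bound).trans_eq
    (by rw [← add_pow, add_sub_cancel, one_pow])

theorem pow_mul_one_sub_pow_le_of_le {p : ℝ} (hp₀ : 0 ≤ p) (hp : p ≤ 1 - p) {n j k : ℕ}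
    (hjk : j ≤ k) (hkn : k ≤ n) :
    p ^ k * (1 - p) ^ (n - k) ≤ p ^ j * (1 - p) ^ (n - j) :=
  calc p ^ k * (1 - p) ^ (n - k) = p ^ j * p ^ (k - j) * (1 - p) ^ (n - k) := by
        rw [← pow_add, Nat.add_sub_cancel' hjk]
    _ ≤ p ^ j * (1 - p) ^ (k - j) * (1 - p) ^ (n - k) := by
        have := hp₀.trans hp
        gcongr
    _ = p ^ j * (1 - p) ^ (n - j) := by rw [mul_assoc, ← pow_add]; congr 2; omega

theorem natCast_div_mem_Icc {k n : ℕ} (hkn : k ≤ n) : (k / n : ℝ) ∈ Set.Icc 0 1 :=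
  ⟨by positivity, div_le_one_of_le₀ (by exact_mod_cast hkn) n.cast_nonneg⟩

theorem choose_le_two_rpow_mul_binEnt (n k : ℕ) :
    (n.choose k : ℝ) ≤ 2 ^ (n * binEnt (k / n)) := by
  rcases lt_or_ge n k with hnk | hkn
  · rw [Nat.choose_eq_zero_of_lt hnk, Nat.cast_zero]; positivity
  obtain ⟨hp₀, hp₁⟩ := natCast_div_mem_Icc hkn
  refine le_two_rpow_mul_binEnt hkn ?_
  simpa [mul_comm] using sum_pow_mul_one_sub_pow_mul_choose_le_one hp₀ hp₁ (n := n)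
    (s := {k}) (by simpa using Nat.lt_succ_of_le hkn)

theorem sum_range_choose_le_two_rpow_mul_binEnt {n t : ℕ} (ht : 2 * t ≤ n) :
    ∑ j ∈ range t, (n.choose j : ℝ) ≤ 2 ^ (n * binEnt (t / n)) := by
  have htn : t ≤ n := by omega
  obtain ⟨hp₀, hp₁⟩ := natCast_div_mem_Icc htn
  have hhalf : (t / n : ℝ) ≤ 1 - t / n := by
    have := div_le_one_of_le₀ (a := ((2 * t : ℕ) : ℝ)) (b := n) (by exact_mod_cast ht)
      n.cast_nonneg
    rw [Nat.cast_mul, Nat.cast_two, mul_div_assoc] at this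
    linarith
  refine le_two_rpow_mul_binEnt htn ?_
  rw [sum_mul]
  refine (sum_le_sum fun j hj => ?_).trans (sum_pow_mul_one_sub_pow_mul_choose_le_one hp₀ hp₁
    (s := range t) (n := n) (range_subset_range.mpr (by omega)))
  rw [mul_comm (n.choose j : ℝ)]
  exact mul_le_mul_of_nonneg_right
    (pow_mul_one_sub_pow_le_of_le hp₀ hhalf (mem_range.mp hj).le htn) (by positivity)

/-- The number of `Δ×Δ` matrices over `F₂` of rank exactly `r` in which
every row and every column has Hamming weight `< t` (with `t ≤ Δ/2`) is at most
`2^(2rΔ h(t/Δ) + 2Δ h(r/Δ))`. -/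
theorem stmt_3 (Δ r t : ℕ) (ht : 2 * t ≤ Δ) :
    (Nat.card {c : Matrix (Fin Δ) (Fin Δ) (ZMod 2) //
        c.rank = r ∧
        (∀ i, (Finset.univ.filter fun j => c i j ≠ 0).card < t) ∧
        (∀ j, (Finset.univ.filter fun i => c i j ≠ 0).card < t)} : ℝ) ≤
      (2 : ℝ) ^ (2 * (r : ℝ) * Δ * binEnt (t / Δ) + 2 * (Δ : ℝ) * binEnt (r / Δ)) := by
  set P : Set (Fin Δ → ZMod 2) := {v | #{i | v i ≠ 0} < t}
  have hcount := Matrix.card_rank_eq_rows_mem_cols_mem_le r P P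
  rw [Fintype.card_fin] at hcount
  have hP : (Nat.card P : ℝ) ≤ 2 ^ (Δ * binEnt (t / Δ)) := by
    refine le_trans ?_ (sum_range_choose_le_two_rpow_mul_binEnt ht)
    exact_mod_cast (card_zmod_two_weight_lt_le t).trans_eq (by rw [Fintype.card_fin])
  have hchoose := choose_le_two_rpow_mul_binEnt Δ r
  calc _ ≤ (Δ.choose r * Δ.choose r * (Nat.card P ^ r * Nat.card P ^ r) : ℝ) := by
        exact_mod_cast hcount
    _ ≤ 2 ^ (Δ * binEnt (r / Δ)) * 2 ^ (Δ * binEnt (r / Δ)) *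
          ((2 ^ (Δ * binEnt (t / Δ))) ^ r * (2 ^ (Δ * binEnt (t / Δ))) ^ r) := by
        gcongr
    _ = _ := by
        rw [← Real.rpow_mul_natCast zero_le_two, ← Real.rpow_add two_pos, ← Real.rpow_add two_pos,
          ← Real.rpow_add two_pos]
        ring_nf
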